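/- Let f(x) = sin(x)(1 - 1/(8 sin(x/2)^3)) on (0, 2π) and let θ_c be its unique critical point in (0, π). If 0 < t₁ < θ_c < t₂ < 2π and f(t₁) ≥ f(t₂), then t₁ + t₂ > 2θ_c > 6π/5. -/

import Mathlib

/-!
The derivative `f'` of `f` has a positive second derivative `f'''` on `(0, 2π)`, so `f'` is
strictly convex there. As `f' θc = 0`, convexity gives
`f' y + f' (2θc - y) > 0` for `y ≠ θc`, hence `y ↦ f (2θc - y) - f y` is strictly decreasing on
`[s, θc]` and vanishes at `θc`: `f s < f (2θc - s)` for `0 < s < θc`. If `t₁ + t₂ ≤ 2θc`, then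
`s = 2θc - t₂` satisfies `t₁ ≤ s < θc`, and since `f` increases on `(0, θc]`,
`f t₁ ≤ f s < f t₂`.

The bound `θc > 3π/5` holds because `f' > 0` on `(0, 3π/5]`: in terms of `s = sin (x/2)`,
which is at most `sin (3π/10)`, this is a polynomial inequality.
-/

open Real Set

noncomputable def f (x : ℝ) : ℝ := Real.sin x * (1 - 1 / (8 * (Real.sin (x/2))^3))

theorem lt_apply_two_mul_sub_of_hasDerivAt {φ φ' : ℝ → ℝ} {c s : ℝ} (hs : s < c)
    (hφ : ∀ y ∈ Icc s (2 * c - s), HasDerivAt φ (φ' y) y)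
    (hpos : ∀ y ∈ Ioo s c, 0 < φ' y + φ' (2 * c - y)) : φ s < φ (2 * c - s) := by
  have hg : ∀ y ∈ Icc s c,
      HasDerivAt (fun y => φ (2 * c - y) - φ y) (-(φ' y + φ' (2 * c - y))) y := by
    intro y hy
    have hr := (hφ (2 * c - y) ⟨by linarith [hy.2], by linarith [hy.1]⟩).comp_const_sub (2 * c) y
    exact (hr.sub (hφ y ⟨hy.1, by linarith [hy.2]⟩)).congr_deriv (by ring)
  have hanti : StrictAntiOn (fun y => φ (2 * c - y) - φ y) (Icc s c) :=
    strictAntiOn_of_deriv_neg (convex_Icc s c)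
      (fun y hy => (hg y hy).continuousAt.continuousWithinAt)
      (fun y hy => by
        rw [interior_Icc] at hy
        rw [(hg y (Ioo_subset_Icc_self hy)).deriv, neg_lt_zero]
        exact hpos y hy)
  have := hanti (left_mem_Icc.2 hs.le) (right_mem_Icc.2 hs.le) hs
  simp only [show 2 * c - c = c by ring, sub_self] at this
  linarith

theorem StrictConvexOn.two_mul_lt_add_apply_two_mul_sub {D : Set ℝ} {g : ℝ → ℝ}
    (hg : StrictConvexOn ℝ D g) {c s : ℝ} (hs : s ∈ D) (hr : 2 * c - s ∈ D) (hsc : s ≠ c) :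
    2 * g c < g s + g (2 * c - s) := by
  have := hg.2 hs hr (by contrapose! hsc; linarith) (by norm_num : (0:ℝ) < 1/2)
    (by norm_num : (0:ℝ) < 1/2) (by norm_num)
  simp only [smul_eq_mul, show 1/2 * s + 1/2 * (2 * c - s) = c by ring] at this
  linarith

noncomputable def f' (x : ℝ) : ℝ := cos x + (1 + cos (x/2)^2) / (8 * sin (x/2)^3)

noncomputable def f'' (x : ℝ) : ℝ := -sin x - cos (x/2) * (5 + cos (x/2)^2) / (16 * sin (x/2)^4)

noncomputable def f''' (x : ℝ) : ℝ :=
  -cos x + (5 + 18 * cos (x/2)^2 + cos (x/2)^4) / (32 * sin (x/2)^5)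

lemma hasDerivAt_sin_half (x : ℝ) : HasDerivAt (fun y => sin (y/2)) (cos (x/2) / 2) x :=
  ((hasDerivAt_id' x).div_const 2).sin.congr_deriv (by ring)

lemma hasDerivAt_cos_half (x : ℝ) : HasDerivAt (fun y => cos (y/2)) (-sin (x/2) / 2) x :=
  ((hasDerivAt_id' x).div_const 2).cos.congr_deriv (by ring)

lemma sin_eq_two_mul_sin_half_mul_cos_half (x : ℝ) : sin x = 2 * sin (x/2) * cos (x/2) := by
  rw [← sin_two_mul, mul_div_cancel₀ x two_ne_zero]

lemma cos_eq_one_sub_two_mul_sin_half_sq (x : ℝ) : cos x = 1 - 2 * sin (x/2)^2 := by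
  rw [← cos_two_mul_eq_one_sub, mul_div_cancel₀ x two_ne_zero]

lemma sin_half_pos {x : ℝ} (hx : x ∈ Ioo 0 (2 * π)) : 0 < sin (x/2) :=
  sin_pos_of_pos_of_lt_pi (by linarith [hx.1]) (by linarith [hx.2])

lemma hasDerivAt_f {x : ℝ} (hs : 0 < sin (x/2)) : HasDerivAt f (f' x) x := by
  have hden := ((hasDerivAt_sin_half x).fun_pow 3).const_mul 8
  have := (hasDerivAt_sin x).fun_mul ((hasDerivAt_const x 1).fun_sub
    ((hasDerivAt_const x 1).fun_div hden (by positivity)))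
  refine HasDerivAt.congr_deriv (f := f) this ?_
  unfold f'
  rw [sin_eq_two_mul_sin_half_mul_cos_half x, cos_eq_one_sub_two_mul_sin_half_sq x]
  field_simp
  linear_combination 2 * sin (x/2)^2 * sin_sq_add_cos_sq (x/2)

lemma hasDerivAt_f' {x : ℝ} (hs : 0 < sin (x/2)) : HasDerivAt f' (f'' x) x := by
  have hnum := (hasDerivAt_const x 1).fun_add ((hasDerivAt_cos_half x).fun_pow 2)
  have hden := ((hasDerivAt_sin_half x).fun_pow 3).const_mul 8
  have := (hasDerivAt_cos x).fun_add (hnum.fun_div hden (by positivity))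
  refine HasDerivAt.congr_deriv (f := f') this ?_
  unfold f''
  rw [sin_eq_two_mul_sin_half_mul_cos_half x]
  field_simp
  linear_combination (-32 * cos (x/2) * sin (x/2)^2) * sin_sq_add_cos_sq (x/2)

lemma hasDerivAt_f'' {x : ℝ} (hs : 0 < sin (x/2)) : HasDerivAt f'' (f''' x) x := by
  have hnum := (hasDerivAt_cos_half x).fun_mul ((hasDerivAt_const x 5).fun_add
    ((hasDerivAt_cos_half x).fun_pow 2))
  have hden := ((hasDerivAt_sin_half x).fun_pow 4).const_mul 16
  have := (hasDerivAt_sin x).fun_neg.fun_sub (hnum.fun_div hden (by positivity))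
  refine HasDerivAt.congr_deriv (f := f'') this ?_
  unfold f'''
  rw [cos_eq_one_sub_two_mul_sin_half_sq x]
  field_simp
  linear_combination (sin (x/2)^3 * (160 + 96 * cos (x/2)^2)) * sin_sq_add_cos_sq (x/2)

lemma continuousOn_f' : ContinuousOn f' (Ioo 0 (2 * π)) :=
  fun _ hx => (hasDerivAt_f' (sin_half_pos hx)).continuousAt.continuousWithinAt

lemma f'''_pos {x : ℝ} (hx : x ∈ Ioo 0 (2 * π)) : 0 < f''' x := by
  have hs := sin_half_pos hx
  have hs1 := sin_le_one (x/2)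
  have key : (1 - 2 * sin (x/2)^2) * (32 * sin (x/2)^5)
      < 5 + 18 * (1 - sin (x/2)^2) + (1 - sin (x/2)^2)^2 := by
    nlinarith [sq_nonneg (sin (x/2)), pow_pos hs 5, pow_pos hs 7, sq_nonneg (sin (x/2)^2 - 1/2),
      pow_le_one₀ (n := 5) hs.le hs1, pow_le_one₀ (n := 7) hs.le hs1]
  unfold f'''
  rw [cos_eq_one_sub_two_mul_sin_half_sq, show cos (x/2)^4 = (cos (x/2)^2)^2 by ring, cos_sq']
  have := (lt_div_iff₀ (by positivity)).2 key
  linarith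

lemma strictConvexOn_f' : StrictConvexOn ℝ (Ioo 0 (2 * π)) f' := by
  have hf'' : StrictMonoOn f'' (Ioo 0 (2 * π)) := by
    refine strictMonoOn_of_deriv_pos (convex_Ioo _ _)
      (fun _ hx => (hasDerivAt_f'' (sin_half_pos hx)).continuousAt.continuousWithinAt) ?_
    rw [interior_Ioo]
    intro x hx
    rw [(hasDerivAt_f'' (sin_half_pos hx)).deriv]
    exact f'''_pos hx
  refine StrictMonoOn.strictConvexOn_of_deriv (convex_Ioo _ _) continuousOn_f' ?_
  rw [interior_Ioo]
  exact hf''.congr fun x hx => (hasDerivAt_f' (sin_half_pos hx)).deriv.symm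

lemma f'_pos_of_le_three_pi_div_five {x : ℝ} (hx0 : 0 < x) (hx : x ≤ 3 * π / 5) : 0 < f' x := by
  have hpi := pi_pos
  have hs : 0 < sin (x/2) := sin_pos_of_pos_of_lt_pi (by linarith) (by linarith)
  have hs_le : sin (x/2) ≤ (1 + √5) / 4 := by
    rw [← cos_pi_div_five, ← sin_pi_div_two_sub]
    exact sin_le_sin_of_le_of_le_pi_div_two (by linarith) (by linarith) (by linarith)
  have hf' :
      f' x = (2 - sin (x/2)^2 + 8 * sin (x/2)^3 - 16 * sin (x/2)^5) / (8 * sin (x/2)^3) := by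
    unfold f'
    rw [cos_eq_one_sub_two_mul_sin_half_sq, cos_sq']
    field_simp
    ring
  rw [hf']
  generalize sin (x/2) = s at hs hs_le ⊢
  -- `(1 + √5)/4 = sin (3π/10)` is the positive root of `4s² - 2s - 1`.
  have hq : 4 * s^2 - 2 * s - 1 ≤ 0 := by
    have h5 := sq_sqrt (show (0:ℝ) ≤ 5 by norm_num)
    nlinarith [mul_nonneg (sub_nonneg.2 hs_le) (show 0 ≤ s - (1 - √5) / 4 by nlinarith)]
  have hP : 0 < 2 - s^2 + 8 * s^3 - 16 * s^5 := by
    nlinarith [mul_nonneg (neg_nonneg.2 hq) hs.le, sq_nonneg s, pow_pos hs 3]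
  exact div_pos hP (by positivity)

lemma three_pi_div_five_lt_of_f'_eq_zero {θ : ℝ} (hθ : 0 < θ) (h : f' θ = 0) : 3 * π / 5 < θ :=
  lt_of_not_ge fun hle => (f'_pos_of_le_three_pi_div_five hθ hle).ne' h

lemma f'_pos_of_lt_unique_zero {θc x : ℝ} (hθc : θc < π)
    (huniq : ∀ θ ∈ Ioo 0 π, f' θ = 0 → θ = θc) (hx0 : 0 < x) (hx : x < θc) : 0 < f' x := by
  have hpi := pi_pos
  rcases le_or_gt x (3 * π / 5) with hle | hlt
  · exact f'_pos_of_le_three_pi_div_five hx0 hle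
  by_contra! hneg
  have hcont : ContinuousOn f' (Icc (3 * π / 5) x) :=
    continuousOn_f'.mono fun y hy => ⟨by linarith [hy.1], by linarith [hy.2]⟩
  obtain ⟨z, hz, hz0⟩ := intermediate_value_Icc' hlt.le hcont
    ⟨hneg, (f'_pos_of_le_three_pi_div_five (by positivity) le_rfl).le⟩
  have := huniq z ⟨by linarith [hz.1], by linarith [hz.2]⟩ hz0
  linarith [hz.2]

lemma strictMonoOn_f {θc : ℝ} (hθc : θc < 2 * π) (hpos : ∀ x ∈ Ioo 0 θc, 0 < f' x) :
    StrictMonoOn f (Ioc 0 θc) := by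
  have hderiv : ∀ x ∈ Ioc 0 θc, HasDerivAt f (f' x) x :=
    fun x hx => hasDerivAt_f (sin_half_pos ⟨hx.1, by linarith [hx.2]⟩)
  refine strictMonoOn_of_deriv_pos (convex_Ioc _ _)
    (fun x hx => (hderiv x hx).continuousAt.continuousWithinAt) ?_
  rw [interior_Ioc]
  intro x hx
  rw [(hderiv x (Ioo_subset_Ioc_self hx)).deriv]
  exact hpos x hx

lemma f_lt_f_two_mul_sub {θc s : ℝ} (hθc : θc < π) (hcrit : f' θc = 0)
    (hs : s ∈ Ioo 0 θc) : f s < f (2 * θc - s) := by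
  obtain ⟨hs0, hsθ⟩ := hs
  refine lt_apply_two_mul_sub_of_hasDerivAt hsθ
    (fun y hy => hasDerivAt_f (sin_half_pos ⟨by linarith [hy.1], by linarith [hy.2, hθc]⟩))
    fun y hy => ?_
  have := strictConvexOn_f'.two_mul_lt_add_apply_two_mul_sub (c := θc)
    ⟨by linarith [hy.1], by linarith [hy.2, hθc]⟩
    ⟨by linarith [hy.2], by linarith [hy.1, hθc]⟩ hy.2.ne
  linarith

theorem stmt7_general (θc : ℝ) (hθc : θc ∈ Ioo (0:ℝ) π) (hcrit : deriv f θc = 0)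
    (huniq : ∀ θ ∈ Ioo (0:ℝ) π, deriv f θ = 0 → θ = θc)
    (t1 t2 : ℝ) (h1 : 0 < t1) (h3 : θc < t2)
    (hf : f t1 ≥ f t2) :
    t1 + t2 > 2*θc ∧ 2*θc > 6*π/5 := by
  have deriv_f : ∀ x ∈ Ioo 0 π, deriv f x = f' x := fun x hx =>
    (hasDerivAt_f (sin_half_pos ⟨hx.1, by linarith [hx.2, pi_pos]⟩)).deriv
  have hcrit' : f' θc = 0 := deriv_f θc hθc ▸ hcrit
  have huniq' : ∀ θ ∈ Ioo 0 π, f' θ = 0 → θ = θc :=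
    fun θ hθ h => huniq θ hθ (by rw [deriv_f θ hθ, h])
  refine ⟨?_, by linarith [three_pi_div_five_lt_of_f'_eq_zero hθc.1 hcrit']⟩
  by_contra! hle
  have hs : 2 * θc - t2 ∈ Ioo 0 θc := ⟨by linarith, by linarith⟩
  have hmono := strictMonoOn_f (by linarith [hθc.2]) fun x hx =>
    f'_pos_of_lt_unique_zero hθc.2 huniq' hx.1 hx.2
  have hle' : f t1 ≤ f (2 * θc - t2) :=
    hmono.monotoneOn ⟨h1, by linarith⟩ ⟨hs.1, hs.2.le⟩ (by linarith)
  have hlt : f (2 * θc - t2) < f t2 := by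
    simpa using f_lt_f_two_mul_sub hθc.2 hcrit' hs
  linarith

theorem stmt7 (θc : ℝ) (hθc : θc ∈ Ioo (0:ℝ) π) (hcrit : deriv f θc = 0)
    (huniq : ∀ θ ∈ Ioo (0:ℝ) π, deriv f θ = 0 → θ = θc)
    (t1 t2 : ℝ) (h1 : 0 < t1) (h2 : t1 < θc) (h3 : θc < t2) (h4 : t2 < 2*π)
    (hf : f t1 ≥ f t2) :
    t1 + t2 > 2*θc ∧ 2*θc > 6*π/5 :=
  stmt7_general θc hθc hcrit huniq t1 t2 h1 h3 hf
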